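/- arXiv:1503.01223 — 6 statements merged into one kernel-verified Lean document; each statement's English description precedes it below -/
import Mathlib

section
/- For W = x^3 + y^3 + y z^2, the maximal diagonal symmetry group G_max is generated by (e^{2 pi i/3}, 1, 1) and (1, e^{2 pi i/3}, e^{2 pi i * 5/6}), and has order 18. -/
/-! Evaluating at `(1,0,0)`, `(0,1,0)` and `(0,1,1)` shows that `β` fixes `W` exactly when it fixes
each of its monomials: `β₀³ = β₁³ = β₁β₂² = 1`. In a group the last equation gives `β₁ = β₂⁻²`, so
`β ↦ (β₀, β₂)` is an isomorphism of `G_max` onto `μ₃ × μ₆`, a group of order 18 generated by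
`(ω, 1)` and `(1, ζ)` for the primitive roots `ω = e^{2πi/3}`, `ζ = e^{2πi·5/6}`. Since `ω ζ² = 1`,
these pull back to `(ω, 1, 1)` and `(1, ω, ζ)`. -/

open MvPolynomial

theorem eval_aeval_C_mul_X {σ R : Type*} [CommSemiring R] (β v : σ → R) (p : MvPolynomial σ R) :
    eval v (aeval (fun i => C (β i) * X i) p) = eval (β * v) p := by
  induction p using MvPolynomial.induction_on with
  | C a => simp
  | add p q hp hq => rw [map_add, map_add, map_add, hp, hq]
  | mul_X p i hp => simp only [map_mul, hp, aeval_X, eval_C, eval_X, Pi.mul_apply]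

namespace X3Y3YZ2

theorem aeval_C_mul_X_eq_self_iff {R : Type*} [CommRing R] (β : Fin 3 → R) :
    aeval (fun i => C (β i) * X i) (X 0 ^ 3 + X 1 ^ 3 + X 1 * X 2 ^ 2 : MvPolynomial (Fin 3) R)
        = X 0 ^ 3 + X 1 ^ 3 + X 1 * X 2 ^ 2 ↔
      β 0 ^ 3 = 1 ∧ β 1 ^ 3 = 1 ∧ β 1 * β 2 ^ 2 = 1 := by
  constructor
  · intro h
    have at_point (v : Fin 3 → R) := congrArg (eval v) h
    have h0 : β 0 ^ 3 = 1 := by simpa [eval_aeval_C_mul_X] using at_point ![1, 0, 0]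
    have h1 : β 1 ^ 3 = 1 := by simpa [eval_aeval_C_mul_X] using at_point ![0, 1, 0]
    have h2 : β 1 ^ 3 + β 1 * β 2 ^ 2 = 1 + 1 := by
      simpa [eval_aeval_C_mul_X] using at_point ![0, 1, 1]
    exact ⟨h0, h1, by linear_combination h2 - h1⟩
  · rintro ⟨h0, h1, h2⟩
    have e0 : (C (β 0) : MvPolynomial (Fin 3) R) ^ 3 = 1 := by rw [← map_pow, h0, map_one]
    have e1 : (C (β 1) : MvPolynomial (Fin 3) R) ^ 3 = 1 := by rw [← map_pow, h1, map_one]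
    have e2 : (C (β 1) * C (β 2) ^ 2 : MvPolynomial (Fin 3) R) = 1 := by
      rw [← map_pow, ← map_mul, h2, map_one]
    simp only [map_add, map_mul, map_pow, aeval_X]
    linear_combination X 0 ^ 3 * e0 + X 1 ^ 3 * e1 + X 1 * X 2 ^ 2 * e2

section

variable (G : Type*) [CommGroup G]

def gmax : Subgroup (Fin 3 → G) where
  carrier := {β | β 0 ^ 3 = 1 ∧ β 1 ^ 3 = 1 ∧ β 1 * β 2 ^ 2 = 1}
  one_mem' := by simp
  mul_mem' := by
    rintro β γ ⟨hβ0, hβ1, hβ2⟩ ⟨hγ0, hγ1, hγ2⟩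
    refine ⟨?_, ?_, ?_⟩ <;> simp only [Pi.mul_apply, mul_pow]
    · rw [hβ0, hγ0, one_mul]
    · rw [hβ1, hγ1, one_mul]
    · rw [mul_mul_mul_comm, hβ2, hγ2, one_mul]
  inv_mem' := by
    rintro β ⟨h0, h1, h2⟩
    refine ⟨?_, ?_, ?_⟩ <;> simp only [Pi.inv_apply, inv_pow]
    · rw [h0, inv_one]
    · rw [h1, inv_one]
    · rw [← mul_inv, h2, inv_one]

variable {G}

theorem mem_gmax_iff {β : Fin 3 → G} :
    β ∈ gmax G ↔ β 0 ^ 3 = 1 ∧ β 1 ^ 3 = 1 ∧ β 1 * β 2 ^ 2 = 1 := Iff.rfl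

theorem apply_one_eq_of_mem_gmax {β : Fin 3 → G} (hβ : β ∈ gmax G) : β 1 = (β 2 ^ 2)⁻¹ :=
  eq_inv_of_mul_eq_one_left hβ.2.2

theorem pow_six_apply_two_eq_one_of_mem_gmax {β : Fin 3 → G} (hβ : β ∈ gmax G) : β 2 ^ 6 = 1 := by
  rw [← inv_eq_one, ← hβ.2.1, apply_one_eq_of_mem_gmax hβ, inv_pow, ← pow_mul]

theorem mk_mem_gmax {u v : G} (hu : u ^ 3 = 1) (hv : v ^ 6 = 1) : ![u, (v ^ 2)⁻¹, v] ∈ gmax G := by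
  refine ⟨hu, ?_, inv_mul_cancel _⟩
  simp only [Matrix.cons_val_one, Matrix.cons_val_zero, inv_pow, ← pow_mul, hv, inv_one]

theorem eq_of_mem_gmax {β γ : Fin 3 → G} (hβ : β ∈ gmax G) (hγ : γ ∈ gmax G)
    (h0 : β 0 = γ 0) (h2 : β 2 = γ 2) : β = γ := by
  have h1 : β 1 = γ 1 := by rw [apply_one_eq_of_mem_gmax hβ, apply_one_eq_of_mem_gmax hγ, h2]
  funext i
  fin_cases i
  exacts [h0, h1, h2]

end

theorem mem_gmax_units_iff_aeval {R : Type*} [CommRing R] (β : Fin 3 → Rˣ) :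
    β ∈ gmax Rˣ ↔ aeval (fun i => C (β i : R) * X i)
      (X 0 ^ 3 + X 1 ^ 3 + X 1 * X 2 ^ 2 : MvPolynomial (Fin 3) R) = X 0 ^ 3 + X 1 ^ 3 + X 1 * X 2 ^ 2 := by
  simp only [aeval_C_mul_X_eq_self_iff, mem_gmax_iff, Units.ext_iff, Units.val_pow_eq_pow_val,
    Units.val_mul, Units.val_one]

def gmaxEquivRootsOfUnity (M : Type*) [CommMonoid M] :
    gmax Mˣ ≃* rootsOfUnity 3 M × rootsOfUnity 6 M where
  toFun β := (⟨β.1 0, β.2.1⟩, ⟨β.1 2, pow_six_apply_two_eq_one_of_mem_gmax β.2⟩)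
  invFun uv := ⟨![uv.1, (uv.2 ^ 2 : Mˣ)⁻¹, uv.2],
    mk_mem_gmax ((mem_rootsOfUnity _ _).1 uv.1.2) ((mem_rootsOfUnity _ _).1 uv.2.2)⟩
  left_inv β := Subtype.ext (eq_of_mem_gmax (SetLike.coe_mem _) β.2 rfl rfl)
  right_inv _ := rfl
  map_mul' _ _ := rfl

theorem card_gmax_units_complex : Nat.card (gmax ℂˣ) = 18 := by
  rw [Nat.card_congr (gmaxEquivRootsOfUnity ℂ).toEquiv, Nat.card_prod, Complex.card_rootsOfUnity,
    Complex.card_rootsOfUnity]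

open Complex
open scoped Real

noncomputable def ω : ℂˣ := Units.mk0 (exp (2 * π * I / 3)) (exp_ne_zero _)

noncomputable def ζ : ℂˣ := Units.mk0 (exp (2 * π * I * (5 / 6))) (exp_ne_zero _)

noncomputable def g₁ : Fin 3 → ℂˣ := ![ω, 1, 1]

noncomputable def g₂ : Fin 3 → ℂˣ := ![1, ω, ζ]

theorem isPrimitiveRoot_ω : IsPrimitiveRoot ω 3 := by
  rw [← IsPrimitiveRoot.coe_units_iff]
  have h := isPrimitiveRoot_exp 3 three_ne_zero
  rwa [Nat.cast_ofNat] at h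

theorem isPrimitiveRoot_ζ : IsPrimitiveRoot ζ 6 := by
  rw [← IsPrimitiveRoot.coe_units_iff]
  have hζ : (ζ : ℂ) = exp (2 * π * I / 6) ^ 5 := by
    rw [ζ, Units.val_mk0, ← exp_nat_mul]
    ring_nf
  rw [hζ]
  exact (isPrimitiveRoot_exp 6 (by norm_num)).pow_of_coprime 5 (by norm_num)

theorem ω_mul_ζ_sq : ω * ζ ^ 2 = 1 := by
  ext
  rw [Units.val_mul, Units.val_pow_eq_pow_val, ω, ζ, Units.val_mk0, Units.val_mk0, ← exp_nat_mul,
    ← exp_add, Units.val_one]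
  convert exp_int_mul_two_pi_mul_I 2 using 2
  push_cast
  ring

theorem gmax_eq_closure : gmax ℂˣ = Subgroup.closure {g₁, g₂} := by
  have hg₁ : g₁ ∈ gmax ℂˣ := ⟨isPrimitiveRoot_ω.pow_eq_one, one_pow _, by simp [g₁]⟩
  have hg₂ : g₂ ∈ gmax ℂˣ := ⟨one_pow _, isPrimitiveRoot_ω.pow_eq_one, ω_mul_ζ_sq⟩
  refine le_antisymm (fun β hβ => ?_) ((Subgroup.closure_le _).2 ?_)
  · have h0 : β 0 ∈ Subgroup.zpowers ω := by
      rw [isPrimitiveRoot_ω.zpowers_eq, _root_.mem_rootsOfUnity]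
      exact hβ.1
    have h2 : β 2 ∈ Subgroup.zpowers ζ := by
      rw [isPrimitiveRoot_ζ.zpowers_eq, _root_.mem_rootsOfUnity]
      exact pow_six_apply_two_eq_one_of_mem_gmax hβ
    obtain ⟨m, hm⟩ := Subgroup.mem_zpowers_iff.1 h0
    obtain ⟨n, hn⟩ := Subgroup.mem_zpowers_iff.1 h2
    refine Subgroup.mem_closure_pair.2 ⟨m, n, eq_of_mem_gmax ?_ hβ ?_ ?_⟩
    · exact mul_mem (zpow_mem hg₁ m) (zpow_mem hg₂ n)
    · simp [g₁, g₂, hm]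
    · simp [g₁, g₂, hn]
  · rintro _ (rfl | rfl)
    exacts [hg₁, hg₂]

end X3Y3YZ2

/-- For `W = x³ + y³ + yz²`, the maximal diagonal symmetry group
`G_max = {β ∈ (ℂ*)³ : W(β₁x, β₂y, β₃z) = W}` is generated by
`(e^{2πi/3}, 1, 1)` and `(1, e^{2πi/3}, e^{2πi·5/6})`, and has order 18. -/
theorem Gmax_of_x3_y3_yz2
    (W : MvPolynomial (Fin 3) ℂ) (hW : W = X 0 ^ 3 + X 1 ^ 3 + X 1 * X 2 ^ 2)
    (Gmax : Set (Fin 3 → ℂˣ))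
    (hG : Gmax = {β | MvPolynomial.aeval (fun i => MvPolynomial.C ((β i : ℂ)) * X i) W = W}) :
    ∃ g₁ g₂ : Fin 3 → ℂˣ,
      ((g₁ 0 : ℂ) = Complex.exp (2 * (Real.pi : ℂ) * Complex.I / 3) ∧
        (g₁ 1 : ℂ) = 1 ∧ (g₁ 2 : ℂ) = 1) ∧
      ((g₂ 0 : ℂ) = 1 ∧
        (g₂ 1 : ℂ) = Complex.exp (2 * (Real.pi : ℂ) * Complex.I / 3) ∧
        (g₂ 2 : ℂ) = Complex.exp (2 * (Real.pi : ℂ) * Complex.I * (5 / 6))) ∧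
      Gmax = (Subgroup.closure {g₁, g₂} : Subgroup (Fin 3 → ℂˣ)) ∧
      Gmax.ncard = 18 := by
  have hGmax : Gmax = X3Y3YZ2.gmax ℂˣ := by
    ext β
    rw [hG, hW, Set.mem_ofPred_eq, SetLike.mem_coe, X3Y3YZ2.mem_gmax_units_iff_aeval]
  refine ⟨X3Y3YZ2.g₁, X3Y3YZ2.g₂, ⟨rfl, rfl, rfl⟩, ⟨rfl, rfl, rfl⟩, ?_, ?_⟩
  · rw [hGmax, X3Y3YZ2.gmax_eq_closure]
  · rw [hGmax, ← Nat.card_coe_set_eq, SetLike.coe_sort_coe, X3Y3YZ2.card_gmax_units_complex]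
end

section
/- The loop polynomial W = x_1^{a_1} x_2 + x_2^{a_2} x_3 + ... + x_N^{a_N} x_1 with all a_k >= 2 is quasihomogeneous, and its weights q_i satisfy the linear system a_i q_i + q_{i+1 mod N} = 1; this system has a unique solution with all q_i in (0, 1/2). -/
/-!
Each monomial `x_i^{a_i} x_{i+1}` has weight `a_i q_i + q_{i+1}`, so quasihomogeneity is exactly
the linear system `a_i q_i + q_{i+1} = 1`. Since every `a_i > 1`, the matrix of this system is
strictly diagonally dominant: at an index maximising `|q_i|`, a kernel vector would satisfy
`|q_{i+1}| = a_i |q_i|`, forcing `q = 0`. Hence the system has a unique solution. Looking at its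
minimum and maximum shows that this solution is positive, and then `a_i q_i = 1 - q_{i+1} < 1`
gives `q_i < 1 / a_i ≤ 1/2`.
-/

open MvPolynomial Finset

/-- `W` is quasihomogeneous with weights `q`. -/
def IsQuasihomogeneous {N : ℕ} (W : MvPolynomial (Fin N) ℂ) (q : Fin N → ℚ) : Prop :=
  ∀ a ∈ W.support, ∑ j, q j * (a j : ℚ) = 1

theorem isQuasihomogeneous_iff_isWeightedHomogeneous {N : ℕ} {W : MvPolynomial (Fin N) ℂ}
    {q : Fin N → ℚ} : IsQuasihomogeneous W q ↔ IsWeightedHomogeneous q W 1 := by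
  simp only [IsQuasihomogeneous, IsWeightedHomogeneous, mem_support_iff, Finsupp.weight_eq_sum,
    nsmul_eq_mul, mul_comm]

theorem isWeightedHomogeneous_sum_X_pow_mul_X {σ ι R M : Type*} [CommSemiring R]
    [AddCommMonoid M] (t : Finset ι) (x y : ι → σ) (a : ι → ℕ) {w : σ → M} {m : M}
    (hw : ∀ i ∈ t, a i • w (x i) + w (y i) = m) :
    IsWeightedHomogeneous w (∑ i ∈ t, X (x i) ^ a i * X (y i) : MvPolynomial σ R) m :=
  IsWeightedHomogeneous.sum _ _ _ fun i hi =>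
    hw i hi ▸ ((isWeightedHomogeneous_X R w _).pow _).mul (isWeightedHomogeneous_X R w _)

section LoopWeightMap

variable {ι K : Type*}

def loopWeightMap [CommSemiring K] (c : ι → K) (s : ι → ι) : (ι → K) →ₗ[K] ι → K where
  toFun q i := c i * q i + q (s i)
  map_add' _ _ := by ext; simp only [Pi.add_apply]; ring
  map_smul' _ _ := by ext; simp only [Pi.smul_apply, smul_eq_mul, RingHom.id_apply]; ring

variable [Field K] [LinearOrder K] [IsStrictOrderedRing K] {c : ι → K} {s : ι → ι}

theorem loopWeightMap_injective [Finite ι] (hc : ∀ i, 1 < c i) :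
    Function.Injective (loopWeightMap c s) := by
  refine (injective_iff_map_eq_zero _).2 fun q hq => funext fun i => ?_
  have : Nonempty ι := ⟨i⟩
  obtain ⟨j, hj⟩ := Finite.exists_max fun i => |q i|
  have hsj : |q (s j)| = c j * |q j| := by
    rw [eq_neg_of_add_eq_zero_right (congrFun hq j), abs_neg, abs_mul,
      abs_of_pos (zero_lt_one.trans (hc j))]
  have hj0 : |q j| ≤ 0 := by nlinarith [hj (s j), hc j, abs_nonneg (q j)]
  exact abs_nonpos_iff.1 ((hj i).trans hj0)

theorem loopWeightMap_bijective [Fintype ι] (hc : ∀ i, 1 < c i) :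
    Function.Bijective (loopWeightMap c s) :=
  have hinj := loopWeightMap_injective hc
  ⟨hinj, LinearMap.injective_iff_surjective.1 hinj⟩

theorem pos_of_loopWeightMap_eq_one [Finite ι] (hc : ∀ i, 1 < c i) {q : ι → K}
    (hq : loopWeightMap c s q = 1) (i : ι) : 0 < q i := by
  have hq' (j : ι) : c j * q j + q (s j) = 1 := congrFun hq j
  have : Nonempty ι := ⟨i⟩
  obtain ⟨jmin, hmin⟩ := Finite.exists_min q
  obtain ⟨jmax, hmax⟩ := Finite.exists_max q
  refine lt_of_lt_of_le ?_ (hmin i)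
  by_contra! hneg
  -- A nonpositive minimum `m` forces the maximum `M` to satisfy `M ≥ 1 - m ≥ 1` and `c M ≤ M`.
  have hmax_ge : 1 - q jmin ≤ q jmax := by nlinarith [hq' jmin, hmax (s jmin), hc jmin]
  have : c jmax * q jmax ≤ q jmax := by linarith [hq' jmax, hmin (s jmax)]
  nlinarith [hc jmax]

theorem lt_inv_of_loopWeightMap_eq_one [Finite ι] (hc : ∀ i, 1 < c i) {q : ι → K}
    (hq : loopWeightMap c s q = 1) (i : ι) : q i < (c i)⁻¹ := by
  have hqi : c i * q i + q (s i) = 1 := congrFun hq i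
  rw [← mul_one (c i)⁻¹, lt_inv_mul_iff₀ (zero_lt_one.trans (hc i))]
  linarith [pos_of_loopWeightMap_eq_one hc hq (s i)]

end LoopWeightMap

/-- The loop polynomial `∑ x_i^{a_i} x_{i+1 mod N}` with all `a_k ≥ 2` is quasihomogeneous;
its weights satisfy `a_i q_i + q_{i+1 mod N} = 1`, and this linear system has a unique
solution, with all `q_i ∈ (0, 1/2)`. -/
theorem loop_polynomial_weights {N : ℕ} (hN : 0 < N) (a : Fin N → ℕ) (ha : ∀ i, 2 ≤ a i)
    (W : MvPolynomial (Fin N) ℂ)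
    (hW : W = ∑ i : Fin N, X i ^ a i * X ⟨(i.val + 1) % N, Nat.mod_lt _ hN⟩) :
    ∃ q : Fin N → ℚ,
      IsQuasihomogeneous W q ∧
      (∀ i : Fin N, (a i : ℚ) * q i + q ⟨(i.val + 1) % N, Nat.mod_lt _ hN⟩ = 1) ∧
      (∀ i, 0 < q i ∧ q i < 1 / 2) ∧
      (∀ q' : Fin N → ℚ,
        (∀ i : Fin N, (a i : ℚ) * q' i + q' ⟨(i.val + 1) % N, Nat.mod_lt _ hN⟩ = 1) →
        q' = q) := by
  let L := loopWeightMap (fun i => (a i : ℚ)) fun i => ⟨(i.val + 1) % N, Nat.mod_lt _ hN⟩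
  have ha' (i : Fin N) : (2 : ℚ) ≤ a i := by exact_mod_cast ha i
  have hc (i : Fin N) : (1 : ℚ) < a i := by linarith [ha' i]
  obtain ⟨q, hq⟩ : ∃ q, L q = 1 := (loopWeightMap_bijective hc).2 1
  have hq' (i : Fin N) : (a i : ℚ) * q i + q ⟨(i.val + 1) % N, Nat.mod_lt _ hN⟩ = 1 :=
    congrFun hq i
  refine ⟨q, ?_, hq', fun i => ⟨pos_of_loopWeightMap_eq_one hc hq i, ?_⟩,
    fun q' hq'' => loopWeightMap_injective hc ((funext hq'' : L q' = 1).trans hq.symm)⟩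
  · rw [isQuasihomogeneous_iff_isWeightedHomogeneous, hW]
    exact isWeightedHomogeneous_sum_X_pow_mul_X _ _ _ _ fun i _ => by
      rw [nsmul_eq_mul]; exact hq' i
  · calc q i < ((a i : ℚ))⁻¹ := lt_inv_of_loopWeightMap_eq_one hc hq i
      _ ≤ 1 / 2 := by rw [one_div]; exact inv_anti₀ two_pos (ha' i)
end

section
/- Let W be an invertible polynomial with invertible exponent matrix E and let G be a subgroup of G_max,W. Then G^T is a subgroup of G_max,W^T, i.e. every h in G^T satisfies E^T h in Z^N. -/
open Matrix Finset

/-- A rational vector is integral. -/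
def IsIntVec {N : ℕ} (v : Fin N → ℚ) : Prop := ∀ i, ∃ m : ℤ, v i = (m : ℚ)

/-- The lattice `ℤ^N ⊆ ℚ^N`; in the additive presentation of symmetry groups inside
`(ℚ/ℤ)^N`, a subgroup corresponds to a subgroup of `ℚ^N` containing `intLattice N`,
and `intLattice N` itself represents the trivial group `{0}`. -/
def intLattice (N : ℕ) : AddSubgroup (Fin N → ℚ) where
  carrier := {v | IsIntVec v}
  zero_mem' := fun i => ⟨0, by simp⟩
  add_mem' := by
    rintro v w hv hw i
    obtain ⟨m, hm⟩ := hv i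
    obtain ⟨n, hn⟩ := hw i
    exact ⟨m + n, by simp [hm, hn]⟩
  neg_mem' := by
    rintro v hv i
    obtain ⟨m, hm⟩ := hv i
    exact ⟨-m, by simp [hm]⟩

/-- The maximal diagonal symmetry group of the invertible polynomial with exponent
matrix `E`, written additively: `G_max = {g ∈ (ℚ/ℤ)^N : E g ∈ ℤ^N}`, here presented by
its preimage in `ℚ^N`. -/
def GmaxGroup {N : ℕ} (E : Matrix (Fin N) (Fin N) ℚ) : AddSubgroup (Fin N → ℚ) where
  carrier := {v | IsIntVec (E.mulVec v)}
  zero_mem' := fun i => ⟨0, by simp [Matrix.mulVec_zero]⟩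
  add_mem' := by
    rintro v w hv hw i
    obtain ⟨m, hm⟩ := hv i
    obtain ⟨n, hn⟩ := hw i
    exact ⟨m + n, by simp [Matrix.mulVec_add, hm, hn]⟩
  neg_mem' := by
    rintro v hv i
    obtain ⟨m, hm⟩ := hv i
    exact ⟨-m, by simp [Matrix.mulVec_neg, hm]⟩

/-- The BHHK transpose group `G^T = {h : h^T E g ∈ ℤ for all g ∈ G}`, in the additive
presentation by representatives in `ℚ^N`. -/
def TransposeGroup {N : ℕ} (E : Matrix (Fin N) (Fin N) ℚ) (G : AddSubgroup (Fin N → ℚ)) :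
    AddSubgroup (Fin N → ℚ) where
  carrier := {h | ∀ g ∈ G, ∃ m : ℤ, h ⬝ᵥ E.mulVec g = (m : ℚ)}
  zero_mem' := fun g _ => ⟨0, by simp⟩
  add_mem' := by
    rintro h₁ h₂ hh₁ hh₂ g hg
    obtain ⟨m, hm⟩ := hh₁ g hg
    obtain ⟨n, hn⟩ := hh₂ g hg
    exact ⟨m + n, by simp [add_dotProduct, hm, hn]⟩
  neg_mem' := by
    rintro h hh g hg
    obtain ⟨m, hm⟩ := hh g hg
    exact ⟨-m, by simp [neg_dotProduct, hm]⟩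

/-! Taking the transpose group reverses inclusions, and `G` contains the lattice `ℤ^N`.
Pairing `h` against the standard basis vectors `e_i ∈ ℤ^N` gives `h ⬝ᵥ E e_i = (Eᵀ h)_i`,
so already `(ℤ^N)^T ≤ G_max,W^T`. -/

theorem single_one_mem_intLattice {N : ℕ} (i : Fin N) :
    (Pi.single i 1 : Fin N → ℚ) ∈ intLattice N := fun k => by
  by_cases hk : k = i
  · exact ⟨1, by simp [hk]⟩
  · exact ⟨0, by simp [hk]⟩

theorem dotProduct_mulVec_single_one {N : ℕ} (E : Matrix (Fin N) (Fin N) ℚ)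
    (h : Fin N → ℚ) (i : Fin N) : h ⬝ᵥ E *ᵥ Pi.single i 1 = (Eᵀ *ᵥ h) i := by
  rw [dotProduct_mulVec, dotProduct_single_one, mulVec_transpose]

theorem transposeGroup_antitone {N : ℕ} (E : Matrix (Fin N) (Fin N) ℚ) :
    Antitone (TransposeGroup E) :=
  fun _ _ hGH _ hh g hg => hh g (hGH hg)

theorem transposeGroup_intLattice_le {N : ℕ} (E : Matrix (Fin N) (Fin N) ℚ) :
    TransposeGroup E (intLattice N) ≤ GmaxGroup Eᵀ := fun h hh i => by
  obtain ⟨m, hm⟩ := hh _ (single_one_mem_intLattice i)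
  exact ⟨m, by rw [← dotProduct_mulVec_single_one, hm]⟩

theorem transpose_le_Gmax_of_transpose_general {N : ℕ} (E : Matrix (Fin N) (Fin N) ℚ)
    (G : AddSubgroup (Fin N → ℚ))
    (hl : intLattice N ≤ G) :
    TransposeGroup E G ≤ GmaxGroup Eᵀ :=
  (transposeGroup_antitone E hl).trans (transposeGroup_intLattice_le E)

/-- For a subgroup `G ≤ G_max,W`, the transpose group `G^T` is a subgroup of
`G_max,W^T = {h : Eᵀ h ∈ ℤ^N}`. -/
theorem transpose_le_Gmax_of_transpose {N : ℕ} (E : Matrix (Fin N) (Fin N) ℚ)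
    (hE : E.det ≠ 0) (G : AddSubgroup (Fin N → ℚ))
    (hl : intLattice N ≤ G) (hmax : G ≤ GmaxGroup E) :
    TransposeGroup E G ≤ GmaxGroup Eᵀ :=
  transpose_le_Gmax_of_transpose_general E G hl
end

section
/- Let W be an invertible polynomial with exponent matrix E, weights q_i (so E q = (1,...,1)^T), grading element J = q mod Z^N in G_max,W. For a subgroup G of G_max,W, J is an element of G if and only if G^T is contained in SL(N), i.e. every h in G^T has age(h) in Z (equivalently sum of phases of h is an integer). -/
open Matrix Finset

/-! With respect to the bilinear form `(h, g) ↦ hᵀ E g`, which is nondegenerate since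
`det E ≠ 0`, the group `Gᵀ` is the dual lattice of `G`; and `G` is a full lattice in `ℚ^N`
because `ℤ^N ≤ G ≤ E⁻¹ ℤ^N`. Lattice biduality gives `G = (Gᵀ)ᵀ`, and since `E q = 1`,
`hᵀ E q = ∑ i, h i`: so `q ∈ G` exactly when every `h ∈ Gᵀ` has integral coordinate sum,
i.e. integral age. -/

@[simp]
theorem AddSubgroup.mem_toIntSubmodule {M : Type*} [AddCommGroup M] {S : AddSubgroup M}
    {x : M} : x ∈ S.toIntSubmodule ↔ x ∈ S :=
  Iff.rfl

open LinearMap.BilinForm in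
theorem Submodule.IsLattice.dualSubmodule_flip_dualSubmodule {R K V : Type*} [CommRing R]
    [IsDomain R] [IsPrincipalIdealRing R] [Field K] [Algebra R K] [IsFractionRing R K]
    [AddCommGroup V] [Module K V] [Module R V] [IsScalarTower R K V]
    {B : LinearMap.BilinForm K V} (hB : B.Nondegenerate) (M : Submodule R V)
    [Submodule.IsLattice K M] :
    B.flip.dualSubmodule (B.dualSubmodule M) = M := by
  let b₀ := Module.Free.chooseBasis R M
  let b := b₀.extendOfIsLattice K
  have hb : Submodule.span R (Set.range b) = M := by
    have : Set.range b = M.subtype '' Set.range b₀ := by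
      rw [← Set.range_comp]; ext; simp [b]
    rw [this, Submodule.span_image, b₀.span_eq, Submodule.map_subtype_top]
  rw [← hb, dualSubmodule_flip_dualSubmodule_of_basis B hB b]

theorem exists_sum_fract_eq_intCast_iff {ι α : Type*} [Ring α] [LinearOrder α]
    [IsStrictOrderedRing α] [FloorRing α] (s : Finset ι) (f : ι → α) :
    (∃ m : ℤ, ∑ i ∈ s, Int.fract (f i) = m) ↔ ∃ m : ℤ, ∑ i ∈ s, f i = m := by
  simp only [Int.fract, Finset.sum_sub_distrib]
  constructor
  · rintro ⟨m, hm⟩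
    exact ⟨m + ∑ i ∈ s, ⌊f i⌋, by push_cast; rw [← hm]; abel⟩
  · rintro ⟨m, hm⟩
    exact ⟨m - ∑ i ∈ s, ⌊f i⌋, by push_cast; rw [hm]⟩

/-- The spanning vectors are the columns of `E⁻¹`. -/
theorem GmaxGroup_toIntSubmodule_eq_span {N : ℕ} {E : Matrix (Fin N) (Fin N) ℚ}
    (hE : IsUnit E.det) :
    (GmaxGroup E).toIntSubmodule = Submodule.span ℤ (Set.range
      ((Pi.basisFun ℚ (Fin N)).map (E.toLinearEquiv (Pi.basisFun ℚ (Fin N)) hE).symm)) := by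
  ext v
  rw [Module.Basis.mem_span_iff_repr_mem]
  simp [GmaxGroup, IsIntVec, eq_comm, Matrix.toLin_eq_toLin']

theorem isLattice_toIntSubmodule_of_le_of_le {N : ℕ} {E : Matrix (Fin N) (Fin N) ℚ}
    (hE : E.det ≠ 0) {G : AddSubgroup (Fin N → ℚ)} (hl : intLattice N ≤ G)
    (hmax : G ≤ GmaxGroup E) :
    G.toIntSubmodule.IsLattice ℚ where
  fg := by
    refine Submodule.FG.of_le ?_ (AddSubgroup.toIntSubmodule.monotone hmax)
    rw [GmaxGroup_toIntSubmodule_eq_span (isUnit_iff_ne_zero.mpr hE)]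
    exact Submodule.fg_span (Set.finite_range _)
  span_eq_top := by
    rw [eq_top_iff, ← (Pi.basisFun ℚ (Fin N)).span_eq]
    refine Submodule.span_mono ?_
    rintro _ ⟨i, rfl⟩
    exact hl fun j => ⟨if j = i then 1 else 0, by simp [Pi.single_apply]⟩

theorem TransposeGroup_toIntSubmodule_eq_dualSubmodule {N : ℕ}
    (E : Matrix (Fin N) (Fin N) ℚ) (G : AddSubgroup (Fin N → ℚ)) :
    (TransposeGroup E G).toIntSubmodule = E.toBilin'.dualSubmodule G.toIntSubmodule := by
  ext h
  simp [TransposeGroup, LinearMap.BilinForm.mem_dualSubmodule, Matrix.toBilin'_apply',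
    Submodule.mem_one, eq_comm]

/-- The grading element `J = q mod ℤ^N` (where `E q = (1,...,1)ᵀ`) lies in `G` if and
only if `G^T ⊆ SL(N)`, i.e. every `h ∈ G^T` has integral age (the sum of its phases,
the fractional parts of its entries, is an integer). -/
theorem J_mem_iff_transpose_in_SL {N : ℕ} (E : Matrix (Fin N) (Fin N) ℚ)
    (hE : E.det ≠ 0) (q : Fin N → ℚ) (hq : E.mulVec q = fun _ => 1)
    (G : AddSubgroup (Fin N → ℚ))
    (hl : intLattice N ≤ G) (hmax : G ≤ GmaxGroup E) :
    q ∈ G ↔ ∀ h ∈ TransposeGroup E G, ∃ m : ℤ, (∑ i, Int.fract (h i)) = (m : ℚ) := by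
  have : G.toIntSubmodule.IsLattice ℚ := isLattice_toIntSubmodule_of_le_of_le hE hl hmax
  have hpair (h : Fin N → ℚ) : E.toBilin' h q = ∑ i, h i := by
    simp [Matrix.toBilin'_apply', hq, dotProduct]
  rw [← AddSubgroup.mem_toIntSubmodule, ← Submodule.IsLattice.dualSubmodule_flip_dualSubmodule
    (LinearMap.BilinForm.nondegenerate_toBilin'_of_det_ne_zero' E hE) G.toIntSubmodule,
    LinearMap.BilinForm.mem_dualSubmodule, ← TransposeGroup_toIntSubmodule_eq_dualSubmodule]
  simp only [AddSubgroup.mem_toIntSubmodule, LinearMap.BilinForm.flip_apply, hpair,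
    Submodule.mem_one, algebraMap_int_eq, eq_intCast, exists_sum_fract_eq_intCast_iff]
  exact forall₂_congr fun _ _ => exists_congr fun _ => eq_comm
end

section
/- Let W be an invertible polynomial with exponent matrix E, and let G_1 <= G_2 <= G_max,W be subgroups. Then the quotient G_2/G_1 is isomorphic to G_1^T/G_2^T. -/
open Matrix Finset

/-!
The pairing `(h, g) ↦ hᵀ E g mod ℤ` identifies `G₁ᵀ / G₂ᵀ` with the character group
`Hom(G₂ / G₁, ℚ/ℤ)`. Its kernel on `G₁ᵀ` is `G₂ᵀ` by definition. It is onto because `G₂` is a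
lattice (`E` embeds it into `ℤᴺ`), so a character of `G₂ / G₁` lifts to a homomorphism
`G₂ → ℚ`; as `G₂ ⊇ ℤᴺ` this is a linear form `g ↦ r ⬝ᵥ g`, and `r = Eᵀ h` can be solved since
`E` is invertible. Finally `G₂ / G₁` is finitely generated and torsion, hence finite, and a
finite abelian group is isomorphic to its `ℚ/ℤ`-dual.
-/

theorem AddCircle.coe_eq_zero_iff_exists_int {𝕜 : Type*} [Ring 𝕜] {x : 𝕜} :
    (x : AddCircle (1 : 𝕜)) = 0 ↔ ∃ m : ℤ, x = m := by
  rw [AddCircle.coe_eq_zero_iff]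
  exact exists_congr fun m => by rw [zsmul_one, eq_comm]

instance (n : ℕ) [NeZero n] : HasEnoughRootsOfUnity (Multiplicative (AddCircle (1 : ℚ))) n := by
  set ζ : Multiplicative (AddCircle (1 : ℚ)) := .ofAdd ↑((1 : ℚ) / n)
  have hζ : IsPrimitiveRoot ζ n := by
    rw [IsPrimitiveRoot.iff_orderOf, orderOf_ofAdd_eq_addOrderOf]
    exact AddCircle.addOrderOf_period_div (NeZero.pos n)
  refine ⟨⟨ζ, hζ⟩, ⟨⟨hζ.toRootsOfUnity, ?_⟩⟩⟩
  rintro ⟨u, hu⟩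
  obtain ⟨q, hq⟩ := QuotientAddGroup.mk_surjective (Multiplicative.toAdd u.val)
  have hnq : ((n * q : ℚ) : AddCircle (1 : ℚ)) = 0 := by
    rw [← nsmul_eq_mul, AddCircle.coe_nsmul, hq, ← toAdd_pow, ← Units.val_pow_eq_pow_val,
      (mem_rootsOfUnity n u).mp hu]
    rfl
  obtain ⟨m, hm⟩ := AddCircle.coe_eq_zero_iff_exists_int.mp hnq
  have hqm : q = m • ((1 : ℚ) / n) := by
    rw [zsmul_eq_mul, ← hm, mul_one_div,
      mul_div_cancel_left₀ q (Nat.cast_ne_zero.mpr (NeZero.ne n))]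
  refine ⟨m, Subtype.ext (Units.ext (Multiplicative.toAdd.injective ?_))⟩
  simp [ζ, ← hq, hqm]

theorem AddCommGroup.nonempty_addMonoidHom_addCircle_addEquiv (A : Type*) [AddCommGroup A]
    [Finite A] : Nonempty ((A →+ AddCircle (1 : ℚ)) ≃+ A) := by
  have : NeZero (Monoid.exponent (Multiplicative A)) := ⟨Monoid.exponent_ne_zero_of_finite⟩
  obtain ⟨e⟩ := CommGroup.monoidHom_mulEquiv_of_hasEnoughRootsOfUnity (Multiplicative A)
    (Multiplicative (AddCircle (1 : ℚ)))
  exact ⟨AddEquiv.toMultiplicative.symm <| MonoidHom.toAdditiveRightMulEquiv.symm.trans <|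
    (MulEquiv.monoidHomCongrRight toUnits).trans e⟩

section

variable {N : ℕ}

theorem exists_nsmul_mem_intLattice (v : Fin N → ℚ) : ∃ n : ℕ, n ≠ 0 ∧ n • v ∈ intLattice N := by
  refine ⟨∏ i, (v i).den, Finset.prod_ne_zero_iff.mpr fun i _ => (v i).den_ne_zero, fun i => ?_⟩
  obtain ⟨k, hk⟩ := Finset.dvd_prod_of_mem (fun j => (v j).den) (Finset.mem_univ i)
  refine ⟨k * (v i).num, ?_⟩
  rw [Pi.smul_apply, hk, nsmul_eq_mul, Nat.cast_mul, mul_comm ((v i).den : ℚ), mul_assoc,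
    Rat.den_mul_eq_num]
  push_cast
  ring

theorem intLattice_eq_range :
    intLattice N = (AddMonoidHom.compLeft (Int.castAddHom ℚ) (Fin N)).range := by
  ext v
  constructor
  · intro hv
    choose z hz using hv
    exact ⟨z, funext fun i => (hz i).symm⟩
  · rintro ⟨z, rfl⟩ i
    exact ⟨z i, rfl⟩

theorem exists_dotProduct_eq_of_intLattice_le {L : AddSubgroup (Fin N → ℚ)}
    (hL : intLattice N ≤ L) (φ : L →+ ℚ) : ∃ r : Fin N → ℚ, ∀ g : L, φ g = r ⬝ᵥ g := by
  set c := AddMonoidHom.compLeft (Int.castAddHom ℚ) (Fin N)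
  have hc : ∀ z, c z ∈ L := fun z => hL (intLattice_eq_range ▸ ⟨z, rfl⟩)
  set r : Fin N → ℚ := fun i => φ ⟨c (Pi.single i 1), hc _⟩
  have hcast : φ.comp (c.codRestrict L hc) =
      (AddMonoidHom.mk' (r ⬝ᵥ ·) (dotProduct_add r)).comp c := by
    ext i
    have hcs : c (Pi.single i 1) = Pi.single i 1 := by
      ext j
      by_cases h : j = i <;> simp [c, h]
    simp [hcs, r]
  -- Clearing denominators carries the identity from `ℤᴺ` to all of `L`.
  refine ⟨r, fun g => ?_⟩
  obtain ⟨n, hn, hng⟩ := exists_nsmul_mem_intLattice (g : Fin N → ℚ)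
  obtain ⟨z, hz⟩ := (intLattice_eq_range ▸ hng :)
  refine nsmul_right_injective hn ?_
  calc n • φ g = φ ⟨c z, hc z⟩ := by rw [← map_nsmul]; congr; exact Subtype.ext hz.symm
    _ = n • (r ⬝ᵥ g) := by rw [← dotProduct_smul, ← hz]; exact DFunLike.congr_fun hcast z

variable {E : Matrix (Fin N) (Fin N) ℚ} {G₁ G₂ : AddSubgroup (Fin N → ℚ)}

theorem addGroup_fg_of_le_gmaxGroup (hE : E.det ≠ 0) (hG₂ : G₂ ≤ GmaxGroup E) :
    AddGroup.FG G₂ := by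
  have : Module.Finite ℤ (intLattice N) := by
    rw [intLattice_eq_range]
    exact Module.Finite.of_surjective
      (AddMonoidHom.compLeft (Int.castAddHom ℚ) (Fin N)).rangeRestrict.toIntLinearMap
      (AddMonoidHom.rangeRestrict_surjective _)
  let f : G₂ →+ intLattice N :=
    { toFun := fun g => ⟨E *ᵥ g, hG₂ g.2⟩
      map_zero' := by ext1; simp
      map_add' := fun g g' => by ext1; simp [mulVec_add] }
  have hf : Function.Injective f := fun g g' h =>
    Subtype.ext <| (mulVec_injective_iff_isUnit.mpr ((isUnit_iff_isUnit_det E).mpr hE.isUnit))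
      (congrArg Subtype.val h)
  exact Module.Finite.iff_addGroup_fg.mp (Module.Finite.of_injective f.toIntLinearMap hf)

theorem finite_quotient_of_intLattice_le_of_le_gmaxGroup (hE : E.det ≠ 0)
    (hl : intLattice N ≤ G₁) (hmax : G₂ ≤ GmaxGroup E) : Finite (G₂ ⧸ G₁.addSubgroupOf G₂) := by
  have := addGroup_fg_of_le_gmaxGroup hE hmax
  have := AddGroup.fg_of_surjective (QuotientAddGroup.mk'_surjective (G₁.addSubgroupOf G₂))
  refine AddCommGroup.finite_of_fg_isAddTorsion _ fun x => ?_
  induction x using QuotientAddGroup.induction_on with | H g => ?_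
  obtain ⟨n, hn, hng⟩ := exists_nsmul_mem_intLattice (g : Fin N → ℚ)
  refine isOfFinAddOrder_iff_nsmul_eq_zero.mpr ⟨n, Nat.pos_of_ne_zero hn, ?_⟩
  rw [← QuotientAddGroup.mk_nsmul, QuotientAddGroup.eq_zero_iff, AddSubgroup.mem_addSubgroupOf]
  exact hl hng

variable (E G₁ G₂) in
def transposePairing : TransposeGroup E G₁ →+ (G₂ ⧸ G₁.addSubgroupOf G₂) →+ AddCircle (1 : ℚ) where
  toFun h := QuotientAddGroup.lift _
    { toFun := fun g => ((h ⬝ᵥ E *ᵥ g : ℚ) : AddCircle (1 : ℚ))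
      map_zero' := by simp
      map_add' := fun g g' => by simp [mulVec_add] }
    fun g hg => AddCircle.coe_eq_zero_iff_exists_int.mpr (h.2 g hg)
  map_zero' := by ext; simp
  map_add' h h' := by
    ext g
    exact congrArg QuotientAddGroup.mk (add_dotProduct _ _ _)

theorem ker_transposePairing :
    (transposePairing E G₁ G₂).ker = (TransposeGroup E G₂).addSubgroupOf (TransposeGroup E G₁) := by
  ext h
  rw [AddMonoidHom.mem_ker, AddSubgroup.mem_addSubgroupOf]
  constructor
  · intro h0 g hg
    exact AddCircle.coe_eq_zero_iff_exists_int.mp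
      (DFunLike.congr_fun h0 (QuotientAddGroup.mk (⟨g, hg⟩ : G₂)))
  · intro hh
    ext g
    exact AddCircle.coe_eq_zero_iff_exists_int.mpr (hh g g.2)

theorem transposePairing_surjective (hE : E.det ≠ 0) (hl : intLattice N ≤ G₁) (h12 : G₁ ≤ G₂)
    (hmax : G₂ ≤ GmaxGroup E) : Function.Surjective (transposePairing E G₁ G₂) := by
  intro χ
  have : Module.Finite ℤ G₂ :=
    Module.Finite.iff_addGroup_fg.mpr (addGroup_fg_of_le_gmaxGroup hE hmax)
  have : Module.Free ℤ G₂ := Module.free_of_finite_type_torsion_free'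
  obtain ⟨φ, hφ⟩ := Module.projective_lifting_property
    (QuotientAddGroup.mk' (AddSubgroup.zmultiples (1 : ℚ))).toIntLinearMap
    (χ.comp (QuotientAddGroup.mk' _)).toIntLinearMap (QuotientAddGroup.mk'_surjective _)
  have hχ : ∀ g : G₂, ((φ g : ℚ) : AddCircle (1 : ℚ)) = χ g := fun g => LinearMap.congr_fun hφ g
  obtain ⟨r, hr⟩ := exists_dotProduct_eq_of_intLattice_le (hl.trans h12) φ.toAddMonoidHom
  have hdot : ∀ g : G₂, (r ᵥ* E⁻¹) ⬝ᵥ E *ᵥ g = φ g := fun g => by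
    rw [dotProduct_mulVec, vecMul_vecMul, nonsing_inv_mul _ hE.isUnit, vecMul_one]
    exact (hr g).symm
  refine ⟨⟨r ᵥ* E⁻¹, fun g hg => ?_⟩, ?_⟩
  · have hg0 : (QuotientAddGroup.mk ⟨g, h12 hg⟩ : G₂ ⧸ G₁.addSubgroupOf G₂) = 0 :=
      (QuotientAddGroup.eq_zero_iff _).mpr hg
    rw [hdot ⟨g, h12 hg⟩, ← AddCircle.coe_eq_zero_iff_exists_int, hχ, hg0, map_zero]
  · ext g
    exact (congrArg _ (hdot g)).trans (hχ g)

end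

/-- For subgroups `G₁ ≤ G₂ ≤ G_max,W`, the quotient `G₂/G₁` is isomorphic to
`G₁^T/G₂^T`. -/
theorem quotient_iso_transpose_quotient {N : ℕ} (E : Matrix (Fin N) (Fin N) ℚ)
    (hE : E.det ≠ 0) (G₁ G₂ : AddSubgroup (Fin N → ℚ))
    (hl : intLattice N ≤ G₁) (h12 : G₁ ≤ G₂) (hmax : G₂ ≤ GmaxGroup E) :
    Nonempty ((G₂ ⧸ G₁.addSubgroupOf G₂) ≃+
      ((TransposeGroup E G₁) ⧸ (TransposeGroup E G₂).addSubgroupOf (TransposeGroup E G₁))) := by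
  have := finite_quotient_of_intLattice_le_of_le_gmaxGroup hE hl hmax
  obtain ⟨dual⟩ :=
    AddCommGroup.nonempty_addMonoidHom_addCircle_addEquiv (G₂ ⧸ G₁.addSubgroupOf G₂)
  rw [← ker_transposePairing]
  exact ⟨dual.symm.trans (QuotientAddGroup.quotientKerEquivOfSurjective _
    (transposePairing_surjective hE hl h12 hmax)).symm⟩
end

section
/- Let W be an invertible polynomial with invertible exponent matrix E. The double transpose recovers the original group: for any subgroup G of G_max,W, (G^T)^T = G. -/
/-!
Put `L = E G`. Then `G ≤ G_max` says `L ≤ ℤ^N`, the transpose is `G^T = L^∨` for the dual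
lattice `L^∨ = {h | h ⬝ᵥ x ∈ ℤ for all x ∈ L}`, and `(G^T)^T = E⁻¹ (L^∨∨)`. So it suffices that
`L^∨∨ = L` for every subgroup `L ≤ ℤ^N`. Since `ℚ/ℤ = AddCircle (1 : ℚ)` is an injective
cogenerator, a point `x ∉ L` is separated from `L` by a character of `ℚ^N` vanishing on `L`;
on `ℤ^N` this character is `y ↦ q ⬝ᵥ y mod ℤ` for some `q ∈ ℚ^N`, so `q ∈ L^∨` while
`q ⬝ᵥ x ∉ ℤ`.
-/

open Matrix Finset

theorem exists_addCircle_hom_le_ker_apply_ne_zero {A : Type*} [AddCommGroup A]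
    {L : AddSubgroup A} {a : A} (ha : a ∉ L) :
    ∃ φ : A →+ AddCircle (1 : ℚ), L ≤ φ.ker ∧ φ a ≠ 0 := by
  have hne : (a : A ⧸ L) ≠ 0 := by rwa [Ne, QuotientAddGroup.eq_zero_iff]
  obtain ⟨c, hc⟩ := CharacterModule.exists_character_apply_ne_zero_of_ne_zero hne
  refine ⟨(c : A ⧸ L →+ AddCircle (1 : ℚ)).comp (QuotientAddGroup.mk' L), fun x hx => ?_, hc⟩
  change c (x : A ⧸ L) = 0
  rw [(QuotientAddGroup.eq_zero_iff x).mpr hx, map_zero]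

theorem coe_addCircle_one_eq_zero_iff (q : ℚ) :
    (q : AddCircle (1 : ℚ)) = 0 ↔ ∃ m : ℤ, q = m := by
  rw [AddCircle.coe_eq_zero_iff]
  simp [eq_comm]

theorem exists_dotProduct_eq_of_addCircle_hom {N : ℕ} (φ : (Fin N → ℚ) →+ AddCircle (1 : ℚ)) :
    ∃ q : Fin N → ℚ, ∀ x, IsIntVec x → ((q ⬝ᵥ x : ℚ) : AddCircle (1 : ℚ)) = φ x := by
  choose q hq using fun j => QuotientAddGroup.mk_surjective (φ (Pi.single j 1))
  refine ⟨q, fun x hx => ?_⟩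
  choose m hm using hx
  have hx : x = ∑ j, m j • Pi.single j (1 : ℚ) := by
    ext i
    simp [Finset.sum_apply, Pi.single_apply, hm]
  have hdot : q ⬝ᵥ x = ∑ j, m j • q j := by
    simp [dotProduct, hm, mul_comm]
  rw [hdot, hx, map_sum, ← QuotientAddGroup.mk'_apply, map_sum]
  refine sum_congr rfl fun j _ => ?_
  rw [map_zsmul, map_zsmul, QuotientAddGroup.mk'_apply, hq]

def dualLattice {N : ℕ} (L : AddSubgroup (Fin N → ℚ)) : AddSubgroup (Fin N → ℚ) where
  carrier := {h | ∀ x ∈ L, ∃ m : ℤ, h ⬝ᵥ x = m}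
  zero_mem' := fun x _ => ⟨0, by simp⟩
  add_mem' := by
    rintro h₁ h₂ hh₁ hh₂ x hx
    obtain ⟨m, hm⟩ := hh₁ x hx
    obtain ⟨n, hn⟩ := hh₂ x hx
    exact ⟨m + n, by simp [add_dotProduct, hm, hn]⟩
  neg_mem' := by
    rintro h hh x hx
    obtain ⟨m, hm⟩ := hh x hx
    exact ⟨-m, by simp [neg_dotProduct, hm]⟩

section dualLattice

variable {N : ℕ}

theorem transposeGroup_eq_dualLattice_map (E : Matrix (Fin N) (Fin N) ℚ)
    (G : AddSubgroup (Fin N → ℚ)) :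
    TransposeGroup E G = dualLattice (G.map E.mulVecLin.toAddMonoidHom) := by
  ext h
  simp [TransposeGroup, dualLattice]

theorem transposeGroup_transpose_eq_comap_dualLattice (E : Matrix (Fin N) (Fin N) ℚ)
    (H : AddSubgroup (Fin N → ℚ)) :
    TransposeGroup Eᵀ H = (dualLattice H).comap E.mulVecLin.toAddMonoidHom := by
  ext g
  simp [TransposeGroup, dualLattice, dotProduct_mulVec, vecMul_transpose]

theorem le_dualLattice_dualLattice (L : AddSubgroup (Fin N → ℚ)) :
    L ≤ dualLattice (dualLattice L) := fun x hx h hh => by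
  rw [dotProduct_comm]
  exact hh x hx

theorem intLattice_le_dualLattice {L : AddSubgroup (Fin N → ℚ)} (hL : L ≤ intLattice N) :
    intLattice N ≤ dualLattice L := fun h hh x hx => by
  choose m hm using hh
  choose n hn using hL hx
  exact ⟨∑ i, m i * n i, by simp [dotProduct, hm, hn]⟩

theorem dualLattice_le_intLattice {M : AddSubgroup (Fin N → ℚ)} (hM : intLattice N ≤ M) :
    dualLattice M ≤ intLattice N := fun x hx i => by
  have hsingle : Pi.single i 1 ∈ M := hM fun j => ⟨if j = i then 1 else 0, by
    by_cases h : j = i <;> simp [h]⟩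
  simpa using hx _ hsingle

theorem dualLattice_dualLattice_le {L : AddSubgroup (Fin N → ℚ)} (hL : L ≤ intLattice N) :
    dualLattice (dualLattice L) ≤ L := by
  intro x hx
  by_contra hxL
  obtain ⟨φ, hLφ, hφx⟩ := exists_addCircle_hom_le_ker_apply_ne_zero hxL
  obtain ⟨q, hq⟩ := exists_dotProduct_eq_of_addCircle_hom φ
  have hqL : q ∈ dualLattice L := fun y hy => by
    rw [← coe_addCircle_one_eq_zero_iff, hq y (hL hy)]
    exact hLφ hy
  have hxint : IsIntVec x := dualLattice_le_intLattice (intLattice_le_dualLattice hL) hx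
  apply hφx
  rw [← hq x hxint, coe_addCircle_one_eq_zero_iff, dotProduct_comm]
  exact hx q hqL

theorem dualLattice_dualLattice {L : AddSubgroup (Fin N → ℚ)} (hL : L ≤ intLattice N) :
    dualLattice (dualLattice L) = L :=
  le_antisymm (dualLattice_dualLattice_le hL) (le_dualLattice_dualLattice L)

end dualLattice

theorem double_transpose_general {N : ℕ} (E : Matrix (Fin N) (Fin N) ℚ) (hE : E.det ≠ 0)
    (G : AddSubgroup (Fin N → ℚ))
    (hmax : G ≤ GmaxGroup E) :
    TransposeGroup Eᵀ (TransposeGroup E G) = G := by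
  have hinj : Function.Injective E.mulVecLin.toAddMonoidHom :=
    Matrix.mulVec_injective_iff_isUnit.mpr ((isUnit_iff_isUnit_det E).mpr hE.isUnit)
  have hint : G.map E.mulVecLin.toAddMonoidHom ≤ intLattice N :=
    AddSubgroup.map_le_iff_le_comap.mpr hmax
  rw [transposeGroup_transpose_eq_comap_dualLattice, transposeGroup_eq_dualLattice_map,
    dualLattice_dualLattice hint, AddSubgroup.comap_map_eq_self_of_injective hinj]

/-- The double BHHK transpose recovers the original group: `(G^T)^T = G`, where the
second transpose is taken with respect to the exponent matrix `Eᵀ` of `Wᵀ`. -/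
theorem double_transpose {N : ℕ} (E : Matrix (Fin N) (Fin N) ℚ) (hE : E.det ≠ 0)
    (G : AddSubgroup (Fin N → ℚ))
    (hl : intLattice N ≤ G) (hmax : G ≤ GmaxGroup E) :
    TransposeGroup Eᵀ (TransposeGroup E G) = G :=
  double_transpose_general E hE G hmax
end
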